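/- arXiv:1709.09608 — 5 statements merged into one kernel-verified Lean document; each statement's English description precedes it below -/
import Mathlib

section
/- Let n ≥ 2 be an integer and define Φ(t) = n ∫₀ᵗ (sinh s)^{n-1} ds for t ≥ 0. Then for all t ≥ 0, (sinh t)^{n(n-1)} − Φ(t)^{n-1} − ((n−1)/n)^n · Φ(t)^n ≥ 0. -/
/-!
Write `n = m + 1` and `a = m / n`, so that `Φ' = n sinh^m`. For `k + j = m`, by induction on
`k`, `Φ^k + a^(k+1) Φ^(k+1) ≤ sinh^(nk) cosh^j`; the case `k = m` is the claim. Both sides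
vanish at `0` (for `k > 0`), so each step compares derivatives: `n (k + 1) sinh^m` times the
previous step accounts for all but `j a^(k+1) Φ^(k+1) sinh^m` of the derivative of the left
side, and that remainder is controlled by `a Φ ≤ sinh^m` and `sinh ≤ cosh`.
-/

open Real

theorem le_of_hasDerivAt_le {f g f' g' : ℝ → ℝ} {a t : ℝ}
    (hf : ∀ x, HasDerivAt f (f' x) x) (hg : ∀ x, HasDerivAt g (g' x) x)
    (ha : f a ≤ g a) (hfg : ∀ x, a < x → f' x ≤ g' x) (ht : a ≤ t) : f t ≤ g t := by
  have hmono : MonotoneOn (g - f) (Set.Ici a) := by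
    refine monotoneOn_of_hasDerivWithinAt_nonneg (convex_Ici a)
      (fun x _ => ((hg x).sub (hf x)).continuousAt.continuousWithinAt)
      (fun x _ => ((hg x).sub (hf x)).hasDerivWithinAt) fun x hx => ?_
    rw [interior_Ici] at hx
    exact sub_nonneg.2 (hfg x hx)
  have := hmono Set.self_mem_Ici ht ht
  simp only [Pi.sub_apply] at this
  linarith

/-- The paper's `Φ`: the volume of the geodesic ball of radius `t` in `ℍⁿ` over `σ_n`. -/
noncomputable def ballVolume (n : ℕ) (t : ℝ) : ℝ :=
  n * ∫ s in (0 : ℝ)..t, sinh s ^ (n - 1)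

@[simp]
theorem ballVolume_zero (n : ℕ) : ballVolume n 0 = 0 := by simp [ballVolume]

theorem hasDerivAt_ballVolume (m : ℕ) (t : ℝ) :
    HasDerivAt (ballVolume (m + 1)) ((m + 1) * sinh t ^ m) t := by
  have hcont : Continuous fun s => sinh s ^ m := continuous_sinh.pow _
  have h := (intervalIntegral.integral_hasDerivAt_right (hcont.intervalIntegrable 0 t)
    (hcont.stronglyMeasurableAtFilter _ _) hcont.continuousAt).const_mul ((m : ℝ) + 1)
  have hdef : ballVolume (m + 1) = fun y => ((m : ℝ) + 1) * ∫ s in (0 : ℝ)..y, sinh s ^ m :=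
    funext fun y => by simp [ballVolume]
  rwa [hdef]

theorem ballVolume_nonneg (n : ℕ) {t : ℝ} (ht : 0 ≤ t) : 0 ≤ ballVolume n t :=
  mul_nonneg n.cast_nonneg <| intervalIntegral.integral_nonneg ht fun _ hs =>
    pow_nonneg (sinh_nonneg_iff.2 hs.1) _

theorem natCast_mul_pow_le_mul_pow_pred_mul {S C : ℝ} (hS : 0 ≤ S) (hSC : S ≤ C) (j : ℕ) :
    (j : ℝ) * S ^ j ≤ j * (C ^ (j - 1) * S) := by
  cases j with
  | zero => simp
  | succ i =>
    rw [Nat.add_sub_cancel, pow_succ]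
    gcongr

theorem mul_ballVolume_le_sinh_pow (m : ℕ) {t : ℝ} (ht : 0 ≤ t) :
    m / (m + 1) * ballVolume (m + 1) t ≤ sinh t ^ m := by
  refine le_of_hasDerivAt_le (fun x => (hasDerivAt_ballVolume m x).const_mul _)
    (fun x => (hasDerivAt_sinh x).pow m) (by cases m <;> simp) (fun x hx => ?_) ht
  rcases m with _ | m
  · simp
  have hS := (sinh_pos_iff.2 hx).le
  calc ((m + 1 : ℕ) : ℝ) / (↑(m + 1) + 1) * ((↑(m + 1) + 1) * sinh x ^ (m + 1))
      = (m + 1 : ℕ) * (sinh x ^ m * sinh x) := by field_simp; rw [pow_succ]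
    _ ≤ (m + 1 : ℕ) * (sinh x ^ m * cosh x) := by gcongr; exact (sinh_lt_cosh x).le
    _ = _ := by push_cast; ring

theorem one_add_mul_ballVolume_le_cosh_pow (m : ℕ) {t : ℝ} (ht : 0 ≤ t) :
    1 + m / (m + 1) * ballVolume (m + 1) t ≤ cosh t ^ m := by
  refine le_of_hasDerivAt_le (fun x => ((hasDerivAt_ballVolume m x).const_mul _).const_add 1)
    (fun x => (hasDerivAt_cosh x).pow m) (by simp) (fun x hx => ?_) ht
  have hS := (sinh_pos_iff.2 hx).le
  calc (m : ℝ) / (m + 1) * ((m + 1) * sinh x ^ m) = m * sinh x ^ m := by field_simp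
    _ ≤ m * (cosh x ^ (m - 1) * sinh x) :=
      natCast_mul_pow_le_mul_pow_pred_mul hS (sinh_lt_cosh x).le m
    _ = _ := by ring

theorem hasDerivAt_sinh_pow_mul_cosh_pow (p q : ℕ) (x : ℝ) :
    HasDerivAt (fun x => sinh x ^ (p + 1) * cosh x ^ q)
      ((p + 1) * sinh x ^ p * cosh x ^ (q + 1)
        + sinh x ^ (p + 1) * (q * (cosh x ^ (q - 1) * sinh x))) x := by
  refine (((hasDerivAt_sinh x).pow (p + 1)).mul ((hasDerivAt_cosh x).pow q)).congr_deriv ?_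
  simp only [Nat.add_sub_cancel, Pi.pow_apply]
  push_cast
  ring

/-- The derivatives of the two sides of `ballVolume_pow_add_le` at step `k + 1`, evaluated at
`y = Φ x`, `S = sinh x`, `C = cosh x`. -/
theorem pow_add_pow_deriv_le {m k j : ℕ} (hm : k + 1 + j = m) {S C y : ℝ} (hS : 0 ≤ S)
    (hSC : S ≤ C) (hy : 0 ≤ y) (hA : m / (m + 1) * y ≤ S ^ m)
    (hP : y ^ k + (m / (m + 1)) ^ (k + 1) * y ^ (k + 1) ≤ S ^ ((m + 1) * k) * C ^ (j + 1)) :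
    (k + 1) * y ^ k * ((m + 1) * S ^ m)
        + (m / (m + 1)) ^ (k + 2) * ((k + 2) * y ^ (k + 1) * ((m + 1) * S ^ m))
      ≤ ((m + 1) * k + m + 1) * S ^ ((m + 1) * k + m) * C ^ (j + 1)
        + S ^ ((m + 1) * k + m + 1) * (j * (C ^ (j - 1) * S)) := by
  have ha : m / (m + 1) * (m + 1 : ℝ) = m := by field_simp
  set a : ℝ := m / (m + 1)
  have hmR : (m : ℝ) = k + 1 + j := by rw [← hm]; push_cast; ring
  have hAk : a ^ (k + 1) * y ^ (k + 1) ≤ S ^ (m * (k + 1)) := by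
    rw [← mul_pow, pow_mul]
    exact pow_le_pow_left₀ (by positivity) hA _
  have hexp : S ^ ((m + 1) * k + m + 1) * S ^ j = S ^ m * S ^ (m * (k + 1)) := by
    rw [← pow_add, ← pow_add]
    congr 1
    subst hm
    ring
  calc (k + 1) * y ^ k * ((m + 1) * S ^ m)
        + a ^ (k + 2) * ((k + 2) * y ^ (k + 1) * ((m + 1) * S ^ m))
      = ((m + 1) * k + m + 1) * S ^ m * (y ^ k + a ^ (k + 1) * y ^ (k + 1))
        + j * (S ^ m * (a ^ (k + 1) * y ^ (k + 1))) := by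
        linear_combination (a ^ (k + 1) * y ^ (k + 1) * S ^ m * (k + 2)) * ha
          + (a ^ (k + 1) * y ^ (k + 1) * S ^ m) * hmR
    _ ≤ ((m + 1) * k + m + 1) * S ^ m * (S ^ ((m + 1) * k) * C ^ (j + 1))
        + j * (S ^ m * S ^ (m * (k + 1))) := by gcongr
    _ = ((m + 1) * k + m + 1) * S ^ ((m + 1) * k + m) * C ^ (j + 1)
        + S ^ ((m + 1) * k + m + 1) * (j * S ^ j) := by rw [← hexp, pow_add S _ m]; ring
    _ ≤ _ := by gcongr _ + _ * ?_; exact natCast_mul_pow_le_mul_pow_pred_mul hS hSC j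

theorem ballVolume_pow_add_le {m k j : ℕ} (hm : k + j = m) {t : ℝ} (ht : 0 ≤ t) :
    ballVolume (m + 1) t ^ k + (m / (m + 1)) ^ (k + 1) * ballVolume (m + 1) t ^ (k + 1)
      ≤ sinh t ^ ((m + 1) * k) * cosh t ^ j := by
  induction k generalizing j t with
  | zero =>
    subst hm
    simpa using one_add_mul_ballVolume_le_cosh_pow j ht
  | succ k ih =>
    have hΦ := hasDerivAt_ballVolume m
    have hexp : (m + 1) * (k + 1) = (m + 1) * k + m + 1 := by ring
    refine le_of_hasDerivAt_le
      (fun x => ((hΦ x).pow (k + 1)).add (((hΦ x).pow (k + 2)).const_mul _))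
      (hexp ▸ hasDerivAt_sinh_pow_mul_cosh_pow ((m + 1) * k + m) j) (by simp) (fun x hx => ?_)
      ht
    have := pow_add_pow_deriv_le (by omega) (sinh_pos_iff.2 hx).le (sinh_lt_cosh x).le
      (ballVolume_nonneg _ hx.le) (mul_ballVolume_le_sinh_pow m hx.le) (ih (by omega) hx.le)
    simp only [Nat.add_sub_cancel]
    push_cast
    rwa [hexp]

theorem key_lemma_F_nonneg (n : ℕ) (hn : 2 ≤ n) (Φ : ℝ → ℝ)
    (hΦ : ∀ t, Φ t = (n : ℝ) * ∫ s in (0:ℝ)..t, Real.sinh s ^ (n - 1)) (t : ℝ) (ht : 0 ≤ t) :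
    0 ≤ Real.sinh t ^ (n * (n - 1)) - Φ t ^ (n - 1)
      - (((n : ℝ) - 1) / n) ^ n * Φ t ^ n := by
  obtain ⟨m, rfl⟩ : ∃ m, n = m + 1 := ⟨n - 1, by omega⟩
  have hΦt : Φ t = ballVolume (m + 1) t := hΦ t
  have h := ballVolume_pow_add_le (add_zero m) ht
  simp only [Nat.add_sub_cancel, Nat.cast_add, Nat.cast_one, add_sub_cancel_right, hΦt]
  simp only [pow_zero, mul_one] at h
  linarith
end

section
/- Let n ≥ 2 be an integer, and let a, b be real numbers with a − b ≤ 0 and b ≥ 0. Then |a − b|^n ≥ |a|^n + |b|^n − n·a·b^{n-1}. -/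
theorem abs_sub_pow_ge (n : ℕ) (hn : 2 ≤ n) (a b : ℝ) (hab : a - b ≤ 0) (hb : 0 ≤ b) :
    |a - b| ^ n ≥ |a| ^ n + |b| ^ n - n * a * b ^ (n - 1) := by
  obtain ⟨m, rfl⟩ : ∃ m, n = m + 1 := ⟨n - 1, (Nat.succ_pred_eq_of_pos (by omega)).symm⟩
  have hm : 1 ≤ m := by omega
  have hm0 : m ≠ 0 := by omega
  rw [abs_of_nonpos hab, abs_of_nonneg hb, neg_sub]
  simp only [Nat.add_sub_cancel]
  have hba : a ≤ b := by linarith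
  rcases le_or_gt 0 a with ha | ha
  · -- case 0 ≤ a
    rw [abs_of_nonneg ha]
    have key := geom_sum₂_mul b (b - a) (m + 1)
    simp only [Nat.add_sub_cancel, sub_sub_cancel] at key
    -- key : (∑ i in range (m+1), b^i * (b-a)^(m-i)) * a = b^(m+1) - (b-a)^(m+1)
    have hsum : (∑ i ∈ Finset.range (m + 1), b ^ i * (b - a) ^ (m - i))
        ≤ ((m : ℝ) + 1) * b ^ m - a ^ m := by
      rw [Finset.sum_range_succ']
      have h1 : ∑ i ∈ Finset.range m, b ^ (i + 1) * (b - a) ^ (m - (i + 1))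
          ≤ ∑ i ∈ Finset.range m, b ^ m := by
        apply Finset.sum_le_sum
        intro i hi
        have hi' : i + 1 ≤ m := Finset.mem_range.mp hi
        calc b ^ (i + 1) * (b - a) ^ (m - (i + 1))
            ≤ b ^ (i + 1) * b ^ (m - (i + 1)) := by
              apply mul_le_mul_of_nonneg_left
              · exact pow_le_pow_left₀ (by linarith) (by linarith) _
              · positivity
          _ = b ^ m := by rw [← pow_add]; congr 1; omega
      have h2 : b ^ 0 * (b - a) ^ (m - 0) ≤ b ^ m - a ^ m := by
        have h3 := pow_add_pow_le ha (show (0:ℝ) ≤ b - a by linarith) hm0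
        have h4 : a + (b - a) = b := by ring
        rw [h4] at h3
        simp only [pow_zero, one_mul, Nat.sub_zero]
        linarith
      rw [Finset.sum_const, nsmul_eq_mul, Finset.card_range] at h1
      linarith
    have hmul := mul_le_mul_of_nonneg_right hsum ha
    have hr : (((m : ℝ) + 1) * b ^ m - a ^ m) * a = ((m : ℝ) + 1) * a * b ^ m - a ^ (m + 1) := by
      ring
    push_cast
    linarith [key, hmul, hr]
  · -- case a < 0
    rw [abs_of_neg ha]
    have key := geom_sum₂_mul (b - a) b (m + 1)
    simp only [Nat.add_sub_cancel, sub_sub_cancel_left] at key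
    -- key : (∑ i in range (m+1), (b-a)^i * b^(m-i)) * (-a) = (b-a)^(m+1) - b^(m+1)
    have hsum : ((m : ℝ) + 1) * b ^ m + (-a) ^ m
        ≤ ∑ i ∈ Finset.range (m + 1), (b - a) ^ i * b ^ (m - i) := by
      rw [Finset.sum_range_succ]
      have h1 : ∑ i ∈ Finset.range m, b ^ m
          ≤ ∑ i ∈ Finset.range m, (b - a) ^ i * b ^ (m - i) := by
        apply Finset.sum_le_sum
        intro i hi
        have hi' : i < m := Finset.mem_range.mp hi
        calc b ^ m = b ^ i * b ^ (m - i) := by rw [← pow_add]; congr 1; omega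
          _ ≤ (b - a) ^ i * b ^ (m - i) := by
              apply mul_le_mul_of_nonneg_right
              · exact pow_le_pow_left₀ hb (by linarith) _
              · positivity
      have h2 : b ^ m + (-a) ^ m ≤ (b - a) ^ m * b ^ (m - m) := by
        have h3 := pow_add_pow_le hb (show (0:ℝ) ≤ -a by linarith) hm0
        have h4 : b + -a = b - a := by ring
        rw [h4] at h3
        simp only [Nat.sub_self, pow_zero, mul_one]
        linarith
      rw [Finset.sum_const, nsmul_eq_mul, Finset.card_range] at h1
      linarith
    have hmul := mul_le_mul_of_nonneg_right hsum (show (0:ℝ) ≤ -a by linarith)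
    have hr : (((m : ℝ) + 1) * b ^ m + (-a) ^ m) * -a = -(((m : ℝ) + 1) * a * b ^ m) + (-a) ^ (m + 1) := by
      ring
    push_cast
    linarith [key, hmul, hr]
end

section
/- Let n ≥ 3 be an integer and for t ≥ 0 set Φ(t) = n ∫₀ᵗ (sinh s)^{n−1} ds. Define H(t) = (sinh t)^{(n−1)(n−2)} + (n(n−2)/(n−1)²)·((sinh t)^{n(n−3)} − Φ(t)^{n−3}) − ((n−1)/n)^{n−2}·Φ(t)^{n−2}. Then H(t) > 0 for all t > 0. -/
/-!
The bounds `Φ < sinh^n` and `((n-1)/n) Φ < sinh^{n-1}` come from comparing the integrand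
with derivatives of powers of `sinh`: `n sinh^{n-1} < (sinh^n)' = n sinh^{n-1} cosh` because
`cosh > 1`, and `(n-1) sinh^{n-1} < (sinh^{n-1})' = (n-1) sinh^{n-2} cosh` because `sinh < cosh`.
Raising them to the powers `n - 3` and `n - 2` gives `Φ^{n-3} ≤ sinh^{n(n-3)}` and
`((n-1)/n)^{n-2} Φ^{n-2} < sinh^{(n-1)(n-2)}`, so the middle term of `H` is nonnegative and the
first term beats the last.
-/

open Real Set intervalIntegral

theorem integral_lt_sub_of_hasDerivAt_of_lt {f f' g : ℝ → ℝ} {a b : ℝ} (hab : a < b)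
    (hf : ∀ x, HasDerivAt f (f' x) x) (hf' : Continuous f') (hg : Continuous g)
    (hlt : ∀ x ∈ Ioo a b, g x < f' x) :
    ∫ x in a..b, g x < f b - f a := by
  have hpos := intervalIntegral_pos_of_pos_on (f := fun x => f' x - g x)
    ((hf'.sub hg).intervalIntegrable a b) (fun x hx => sub_pos.2 (hlt x hx)) hab
  rwa [integral_sub (hf'.intervalIntegrable a b) (hg.intervalIntegrable a b), sub_pos,
    integral_eq_sub_of_hasDerivAt (fun x _ => hf x) (hf'.intervalIntegrable a b)] at hpos

theorem mul_integral_sinh_pow_lt_sinh_pow_succ (m : ℕ) {t : ℝ} (ht : 0 < t) :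
    (m + 1 : ℝ) * ∫ x in (0 : ℝ)..t, sinh x ^ m < sinh t ^ (m + 1) := by
  rw [← integral_const_mul]
  have h := integral_lt_sub_of_hasDerivAt_of_lt ht (fun x => (hasDerivAt_sinh x).pow (m + 1))
    (by fun_prop) (g := fun x => (m + 1 : ℝ) * sinh x ^ m) (by fun_prop) fun x hx => by
      have hsinh : 0 < sinh x := sinh_pos_iff.2 hx.1
      push_cast
      exact lt_mul_of_one_lt_right (by positivity) (one_lt_cosh.2 hx.1.ne')
  simpa using h

theorem mul_integral_sinh_pow_lt_sinh_pow {m : ℕ} (hm : m ≠ 0) {t : ℝ} (ht : 0 < t) :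
    (m : ℝ) * ∫ x in (0 : ℝ)..t, sinh x ^ m < sinh t ^ m := by
  rw [← integral_const_mul]
  have h := integral_lt_sub_of_hasDerivAt_of_lt ht (fun x => (hasDerivAt_sinh x).pow m)
    (by fun_prop) (g := fun x => (m : ℝ) * sinh x ^ m) (by fun_prop) fun x hx => by
      have hsinh : 0 < sinh x := sinh_pos_iff.2 hx.1
      have hpow : sinh x ^ m = sinh x ^ (m - 1) * sinh x := by
        rw [← pow_succ, Nat.sub_add_cancel (Nat.one_le_iff_ne_zero.2 hm)]
      rw [hpow, ← mul_assoc]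
      exact mul_lt_mul_of_pos_left (sinh_lt_cosh x) (by positivity)
  simpa [zero_pow hm] using h

theorem sinh_pow_add_sub_pos (n : ℕ) (hn : 3 ≤ n) {s P : ℝ} (hP : 0 ≤ P)
    (hPn : P < s ^ n) (hPn1 : ((n : ℝ) - 1) / n * P < s ^ (n - 1)) :
    0 < s ^ ((n - 1) * (n - 2))
      + ((n : ℝ) * (n - 2) / ((n : ℝ) - 1) ^ 2) * (s ^ (n * (n - 3)) - P ^ (n - 3))
      - (((n : ℝ) - 1) / n) ^ (n - 2) * P ^ (n - 2) := by
  have hn' : (3 : ℝ) ≤ n := by exact_mod_cast hn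
  have hlast : (((n : ℝ) - 1) / n) ^ (n - 2) * P ^ (n - 2) < s ^ ((n - 1) * (n - 2)) := by
    rw [← mul_pow, pow_mul]
    exact pow_lt_pow_left₀ hPn1 (mul_nonneg (div_nonneg (by linarith) (by linarith)) hP)
      (by omega)
  have hmid : P ^ (n - 3) ≤ s ^ (n * (n - 3)) := by
    rw [pow_mul]
    exact pow_le_pow_left₀ hP hPn.le _
  have hcoeff : 0 ≤ (n : ℝ) * (n - 2) / ((n : ℝ) - 1) ^ 2 := by
    apply div_nonneg (mul_nonneg (by linarith) (by linarith)) (sq_nonneg _)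
  linarith [mul_nonneg hcoeff (sub_nonneg.2 hmid)]

theorem H_pos (n : ℕ) (hn : 3 ≤ n) (Φ : ℝ → ℝ)
    (hΦ : ∀ t, Φ t = (n : ℝ) * ∫ s in (0:ℝ)..t, Real.sinh s ^ (n - 1)) (t : ℝ) (ht : 0 < t) :
    0 < Real.sinh t ^ ((n - 1) * (n - 2))
      + ((n : ℝ) * (n - 2) / ((n : ℝ) - 1) ^ 2)
        * (Real.sinh t ^ (n * (n - 3)) - Φ t ^ (n - 3))
      - (((n : ℝ) - 1) / n) ^ (n - 2) * Φ t ^ (n - 2) := by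
  have hn1 : ((n - 1 : ℕ) : ℝ) = n - 1 := by rw [Nat.cast_sub (by omega), Nat.cast_one]
  have hΦ_nonneg : 0 ≤ Φ t := by
    rw [hΦ]
    exact mul_nonneg n.cast_nonneg
      (integral_nonneg ht.le fun x hx => pow_nonneg (sinh_nonneg_iff.2 hx.1) _)
  have hΦ_lt : Φ t < sinh t ^ n := by
    have h := mul_integral_sinh_pow_lt_sinh_pow_succ (n - 1) ht
    rwa [hn1, sub_add_cancel, Nat.sub_add_cancel (by omega), ← hΦ] at h
  have hΦ_lt' : ((n : ℝ) - 1) / n * Φ t < sinh t ^ (n - 1) := by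
    have h := mul_integral_sinh_pow_lt_sinh_pow (m := n - 1) (by omega) ht
    have hn0 : (n : ℝ) ≠ 0 := by positivity
    rwa [hn1, ← div_mul_cancel₀ ((n : ℝ) - 1) hn0, mul_assoc, ← hΦ] at h
  exact sinh_pow_add_sub_pos n hn hΦ_nonneg hΦ_lt hΦ_lt'
end

section
/- Let n ≥ 2 and define ψ_k(x) = (1−|x|²)^{(n−1)/n + 1/(nk)} on the unit ball B^n ⊂ R^n for integers k ≥ 1. Then with respect to the hyperbolic metric g(x) = 4(1−|x|²)^{−2}Σdx_i², one has ∫_{B^n} ψ_k^n dVol_g = ω_{n−1} 2^{n−1} B(1/k, n/2) and ∫_{B^n} |∇_g ψ_k|_g^n dVol_g = ω_{n−1} 2^{n−1} ((n−1)/n + 1/(nk))^n B(1/k, n). -/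
/-!
With `α = (n - 1)/n + 1/(nk)` one has `n (α - 1) = 1/k - 1`, so against the conformal factor
`(2 / (1 - r²)) ^ n` both integrands become radial functions of the form
`C r ^ m (1 - r²) ^ (1/k - 1)`, with `m = 0` and `m = n` respectively
(`|∇ψ_k| = 2α r (1 - r²) ^ (α - 1)`). Polar coordinates reduce such an integral to
`ω_{n-1} ∫₀¹ r ^ (n - 1 + m) (1 - r²) ^ c dr`, and the substitution `t = r²`
turns this into `ω_{n-1} / 2 · B(c + 1, (n + m)/2)`.
-/

open MeasureTheory Set Metric Module InnerProductSpace

theorem image_sq_Ioo_zero_one : (fun r : ℝ => r ^ 2) '' Ioo 0 1 = Ioo 0 1 := by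
  ext t
  constructor
  · rintro ⟨r, ⟨hr0, hr1⟩, rfl⟩
    exact ⟨by positivity, by nlinarith⟩
  · rintro ⟨ht0, ht1⟩
    refine ⟨√t, ⟨Real.sqrt_pos.2 ht0, ?_⟩, Real.sq_sqrt ht0.le⟩
    rwa [Real.sqrt_lt' one_pos, one_pow]

theorem integral_Ioo_mul_comp_sq (g : ℝ → ℝ) :
    ∫ r in Ioo (0 : ℝ) 1, 2 * r * g (r ^ 2) = ∫ t in Ioo (0 : ℝ) 1, g t := by
  have hinj : InjOn (fun r : ℝ => r ^ 2) (Ioo 0 1) :=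
    (pow_left_strictMonoOn₀ (M₀ := ℝ) two_ne_zero).injOn.mono fun r hr => le_of_lt hr.1
  conv_rhs => rw [← image_sq_Ioo_zero_one, integral_image_eq_integral_abs_deriv_smul
    measurableSet_Ioo (fun r _ => (hasDerivAt_pow 2 r).hasDerivWithinAt) hinj]
  refine setIntegral_congr_fun measurableSet_Ioo fun r hr => ?_
  norm_num [abs_of_pos hr.1]

theorem integral_Ioo_rpow_mul_comp_sq (s : ℝ) (g : ℝ → ℝ) :
    ∫ r in Ioo (0 : ℝ) 1, r ^ s * g (r ^ 2)
      = 2⁻¹ * ∫ t in Ioo (0 : ℝ) 1, t ^ ((s - 1) / 2) * g t := by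
  rw [← integral_Ioo_mul_comp_sq (fun t => t ^ ((s - 1) / 2) * g t), ← integral_const_mul]
  refine setIntegral_congr_fun measurableSet_Ioo fun r hr => ?_
  have hsq : (r ^ 2) ^ ((s - 1) / 2) = r ^ (s - 1) := by
    rw [← Real.rpow_natCast, ← Real.rpow_mul hr.1.le, Nat.cast_ofNat, mul_div_cancel₀ _ two_ne_zero]
  rw [hsq, Real.rpow_sub_one hr.1.ne']
  field_simp [hr.1.ne']

theorem integral_Ioo_rpow_mul_one_sub_rpow (a b : ℝ) :
    ∫ t in Ioo (0 : ℝ) 1, t ^ a * (1 - t) ^ b = ∫ t in (0 : ℝ)..1, t ^ b * (1 - t) ^ a := by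
  have h := intervalIntegral.integral_comp_sub_left (fun t : ℝ => t ^ b * (1 - t) ^ a) (1 : ℝ)
    (a := 0) (b := 1)
  simp only [sub_sub_cancel, sub_zero, sub_self] at h
  rw [← h, intervalIntegral.integral_of_le zero_le_one, integral_Ioc_eq_integral_Ioo]
  simp_rw [mul_comm]

section Radial

variable {E : Type*} [NormedAddCommGroup E] [NormedSpace ℝ E] [Nontrivial E]
  [FiniteDimensional ℝ E] [MeasurableSpace E] [BorelSpace E] (μ : Measure E) [μ.IsAddHaarMeasure]

theorem setIntegral_ball_fun_norm (F : ℝ → ℝ) :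
    ∫ x in ball (0 : E) 1, F ‖x‖ ∂μ
      = finrank ℝ E * (μ (ball 0 1)).toReal *
          ∫ r in Ioo (0 : ℝ) 1, r ^ (finrank ℝ E - 1) * F r := by
  have hind : (ball (0 : E) 1).indicator (fun x => F ‖x‖) = fun x => (Iio 1).indicator F ‖x‖ := by
    rw [ball_zero_eq]
    rfl
  rw [← integral_indicator measurableSet_ball, hind, integral_fun_norm_addHaar μ]
  simp_rw [smul_eq_mul, ← indicator_mul_right _ fun y : ℝ => y ^ (finrank ℝ E - 1)]
  rw [setIntegral_indicator measurableSet_Iio, Ioi_inter_Iio, nsmul_eq_mul, mul_assoc]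
  rfl

theorem setIntegral_ball_norm_pow_mul_one_sub_sq_rpow (m : ℕ) (c : ℝ) :
    ∫ x in ball (0 : E) 1, ‖x‖ ^ m * (1 - ‖x‖ ^ 2) ^ c ∂μ
      = finrank ℝ E * (μ (ball 0 1)).toReal / 2 *
          ∫ t in (0 : ℝ)..1, t ^ c * (1 - t) ^ (((finrank ℝ E : ℝ) + m) / 2 - 1) := by
  have hd : 1 ≤ finrank ℝ E := finrank_pos
  have hpow : ∀ r : ℝ, r ^ (finrank ℝ E - 1) * (r ^ m * (1 - r ^ 2) ^ c)
      = r ^ ((finrank ℝ E - 1 + m : ℕ) : ℝ) * (1 - r ^ 2) ^ c := by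
    intro r
    rw [Real.rpow_natCast, pow_add, mul_assoc]
  rw [setIntegral_ball_fun_norm μ (fun r => r ^ m * (1 - r ^ 2) ^ c)]
  simp_rw [hpow]
  rw [integral_Ioo_rpow_mul_comp_sq _ (fun t => (1 - t) ^ c), integral_Ioo_rpow_mul_one_sub_rpow]
  push_cast [Nat.cast_sub hd]
  ring_nf

end Radial

section Gradient

variable {F : Type*} [NormedAddCommGroup F] [InnerProductSpace ℝ F] [CompleteSpace F]

theorem hasGradientAt_one_sub_norm_sq_rpow (α : ℝ) {x : F} (hx : ‖x‖ < 1) :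
    HasGradientAt (fun y => (1 - ‖y‖ ^ 2) ^ α) ((-2 * α * (1 - ‖x‖ ^ 2) ^ (α - 1)) • x) x := by
  have hp : 1 - ‖x‖ ^ 2 ≠ 0 := by nlinarith [norm_nonneg x]
  rw [hasGradientAt_iff_hasFDerivAt]
  refine (((hasStrictFDerivAt_norm_sq x).hasFDerivAt.const_sub 1).rpow_const
    (Or.inl hp)).congr_fderiv ?_
  ext v
  simp
  ring

theorem norm_gradient_one_sub_norm_sq_rpow {α : ℝ} (hα : 0 ≤ α) {x : F} (hx : ‖x‖ < 1) :
    ‖gradient (fun y : F => (1 - ‖y‖ ^ 2) ^ α) x‖ = 2 * α * (1 - ‖x‖ ^ 2) ^ (α - 1) * ‖x‖ := by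
  have hp : 0 < 1 - ‖x‖ ^ 2 := by nlinarith [norm_nonneg x]
  rw [(hasGradientAt_one_sub_norm_sq_rpow α hx).gradient, norm_smul, Real.norm_eq_abs,
    abs_of_nonpos (by nlinarith [Real.rpow_nonneg hp.le (α - 1)])]
  ring

end Gradient

theorem rpow_pow_mul_two_div_pow {p : ℝ} (hp : 0 < p) (α : ℝ) (n : ℕ) :
    (p ^ α) ^ n * (2 / p) ^ n = 2 ^ n * p ^ ((α - 1) * n) := by
  rw [← mul_pow, Real.rpow_mul_natCast hp.le, ← mul_pow, Real.rpow_sub_one hp.ne']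
  ring

theorem div_two_mul_pow_mul_two_div_pow {p : ℝ} (hp : 0 < p) (α r : ℝ) (n : ℕ) :
    (p / 2 * (2 * α * p ^ (α - 1) * r)) ^ n * (2 / p) ^ n
      = 2 ^ n * α ^ n * (r ^ n * p ^ ((α - 1) * n)) := by
  have hpα : p / 2 * (2 * α * p ^ (α - 1) * r) = α * r * p ^ α := by
    rw [Real.rpow_sub_one hp.ne']
    field_simp
  rw [hpα, mul_pow, mul_assoc, rpow_pow_mul_two_div_pow hp, mul_pow]
  ring

theorem psi_k_integrals_general (n : ℕ) (hn : 2 ≤ n) (k : ℕ)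
    (ω : ℝ) (hω : ω = n * (volume (ball (0 : EuclideanSpace ℝ (Fin n)) 1)).toReal)
    (B : ℝ → ℝ → ℝ)
    (hB : ∀ a b : ℝ, B a b = ∫ t in (0:ℝ)..1, t ^ (a - 1) * (1 - t) ^ (b - 1))
    (ψ : EuclideanSpace ℝ (Fin n) → ℝ)
    (hψ : ∀ x : EuclideanSpace ℝ (Fin n),
      ψ x = (1 - ‖x‖ ^ 2) ^ (((n : ℝ) - 1) / n + 1 / ((n : ℝ) * k))) :
    (∫ x in ball (0 : EuclideanSpace ℝ (Fin n)) 1, ψ x ^ n * (2 / (1 - ‖x‖ ^ 2)) ^ n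
      = ω * 2 ^ (n - 1) * B (1 / k) ((n : ℝ) / 2)) ∧
    (∫ x in ball (0 : EuclideanSpace ℝ (Fin n)) 1,
        ((1 - ‖x‖ ^ 2) / 2 * ‖gradient ψ x‖) ^ n * (2 / (1 - ‖x‖ ^ 2)) ^ n
      = ω * 2 ^ (n - 1) * (((n : ℝ) - 1) / n + 1 / ((n : ℝ) * k)) ^ n * B (1 / k) n) := by
  set α : ℝ := ((n : ℝ) - 1) / n + 1 / ((n : ℝ) * k)
  have hn1 : (1 : ℝ) ≤ n := by exact_mod_cast (by omega : 1 ≤ n)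
  have hα0 : 0 ≤ α := add_nonneg (div_nonneg (by linarith) n.cast_nonneg) (by positivity)
  have hexp : (α - 1) * n = 1 / k - 1 := by
    simp only [α]
    field_simp
    ring
  have : Nontrivial (EuclideanSpace ℝ (Fin n)) :=
    Module.nontrivial_of_finrank_pos (R := ℝ) (by rw [finrank_euclideanSpace_fin]; omega)
  have hp : ∀ x ∈ ball (0 : EuclideanSpace ℝ (Fin n)) 1, 0 < 1 - ‖x‖ ^ 2 := fun x hx => by
    nlinarith [norm_nonneg x, mem_ball_zero_iff.1 hx]
  have h1 : EqOn (fun x => ψ x ^ n * (2 / (1 - ‖x‖ ^ 2)) ^ n)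
      (fun x => 2 ^ n * (‖x‖ ^ 0 * (1 - ‖x‖ ^ 2) ^ (1 / (k : ℝ) - 1))) (ball 0 1) := fun x hx => by
    dsimp only
    rw [hψ, rpow_pow_mul_two_div_pow (hp x hx), hexp, pow_zero, one_mul]
  have h2 : EqOn (fun x => ((1 - ‖x‖ ^ 2) / 2 * ‖gradient ψ x‖) ^ n * (2 / (1 - ‖x‖ ^ 2)) ^ n)
      (fun x => 2 ^ n * α ^ n * (‖x‖ ^ n * (1 - ‖x‖ ^ 2) ^ (1 / (k : ℝ) - 1))) (ball 0 1) :=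
    fun x hx => by
      dsimp only
      rw [funext hψ, norm_gradient_one_sub_norm_sq_rpow hα0 (mem_ball_zero_iff.1 hx),
        div_two_mul_pow_mul_two_div_pow (hp x hx), hexp]
  have hball := setIntegral_ball_norm_pow_mul_one_sub_sq_rpow
    (volume : Measure (EuclideanSpace ℝ (Fin n)))
  rw [setIntegral_congr_fun measurableSet_ball h1, setIntegral_congr_fun measurableSet_ball h2,
    integral_const_mul, integral_const_mul, hball, hball, finrank_euclideanSpace_fin, hB, hB, hω,
    ← pow_sub_one_mul (by omega : n ≠ 0), Nat.cast_zero, add_zero, ← two_mul,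
    mul_div_cancel_left₀ _ two_ne_zero]
  constructor <;> ring

theorem psi_k_integrals (n : ℕ) (hn : 2 ≤ n) (k : ℕ) (hk : 1 ≤ k)
    (ω : ℝ) (hω : ω = n * (volume (ball (0 : EuclideanSpace ℝ (Fin n)) 1)).toReal)
    (B : ℝ → ℝ → ℝ)
    (hB : ∀ a b : ℝ, B a b = ∫ t in (0:ℝ)..1, t ^ (a - 1) * (1 - t) ^ (b - 1))
    (ψ : EuclideanSpace ℝ (Fin n) → ℝ)
    (hψ : ∀ x : EuclideanSpace ℝ (Fin n),
      ψ x = (1 - ‖x‖ ^ 2) ^ (((n : ℝ) - 1) / n + 1 / ((n : ℝ) * k))) :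
    (∫ x in ball (0 : EuclideanSpace ℝ (Fin n)) 1, ψ x ^ n * (2 / (1 - ‖x‖ ^ 2)) ^ n
      = ω * 2 ^ (n - 1) * B (1 / k) ((n : ℝ) / 2)) ∧
    (∫ x in ball (0 : EuclideanSpace ℝ (Fin n)) 1,
        ((1 - ‖x‖ ^ 2) / 2 * ‖gradient ψ x‖) ^ n * (2 / (1 - ‖x‖ ^ 2)) ^ n
      = ω * 2 ^ (n - 1) * (((n : ℝ) - 1) / n + 1 / ((n : ℝ) * k)) ^ n * B (1 / k) n) :=
  psi_k_integrals_general n hn k ω hω B hB ψ hψ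
end

section
/- Let n ≥ 2 and define, for x in the unit ball B^n, u_k(x) = ω_{n−1}^{−1/n} · (k^{(n−1)/n} if ρ(x) < e^{−k}; k^{(n−1)/n}·(−ln ρ(x))/k if e^{−k} ≤ ρ(x) < 1; 0 if ρ(x) ≥ 1), where ρ(x) = ln((1+|x|)/(1−|x|)). Then ∫_{B^n}|∇_g u_k|_g^n dVol_g = (1/k)∫_{e^{−k}}^1 t^{−n}(sinh t)^{n−1} dt and ∫_{B^n}|u_k|^n dVol_g = k^{n−1}∫₀^{e^{−k}}(sinh t)^{n−1} dt + k^{−1}∫_{e^{−k}}^1 (−ln t)^n (sinh t)^{n−1} dt. -/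
open MeasureTheory Set Metric

noncomputable def Rmap (r : ℝ) : ℝ := Real.log ((1 + r) / (1 - r))

lemma Rmap_strictMonoOn : StrictMonoOn Rmap (Ico (0:ℝ) 1) := by
  intro a ha b hb hab
  obtain ⟨ha0, ha1⟩ := ha
  obtain ⟨hb0, hb1⟩ := hb
  apply Real.log_lt_log (div_pos (by linarith) (by linarith))
  rw [div_lt_div_iff₀ (by linarith) (by linarith)]
  nlinarith

lemma Rmap_inv (t : ℝ) : Rmap ((Real.exp t - 1)/(Real.exp t + 1)) = t := by
  have h : (0:ℝ) < Real.exp t := Real.exp_pos t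
  have h1 : Real.exp t + 1 ≠ 0 := by positivity
  unfold Rmap
  have e1 : (1 + (Real.exp t - 1)/(Real.exp t + 1)) / (1 - (Real.exp t - 1)/(Real.exp t + 1))
      = Real.exp t := by
    rw [div_eq_iff]
    · field_simp; ring
    · intro hc
      rw [sub_eq_zero, eq_comm, div_eq_one_iff_eq h1] at hc
      linarith
  rw [e1, Real.log_exp]

lemma Rmap_hasDerivAt {r : ℝ} (h1 : -1 < r) (h2 : r < 1) :
    HasDerivAt Rmap (2/(1-r^2)) r := by
  have hne : (1:ℝ) - r ≠ 0 := by linarith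
  have hne2 : (1:ℝ) + r ≠ 0 := by linarith
  have hne3 : (1:ℝ) - r^2 ≠ 0 := by nlinarith
  have hpos : (0:ℝ) < (1 + r)/(1 - r) := div_pos (by linarith) (by linarith)
  have hd : HasDerivAt (fun r : ℝ => (1+r)/(1-r)) (2/(1-r)^2) r := by
    have h := (((hasDerivAt_id' r).const_add 1).div ((hasDerivAt_id' r).const_sub 1) hne)
    refine h.congr_deriv ?_
    rw [div_eq_div_iff (pow_ne_zero 2 hne) (pow_ne_zero 2 hne)]
    ring
  have := hd.log (ne_of_gt hpos)
  refine this.congr_deriv ?_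
  field_simp
  ring

lemma sinh_Rmap {r : ℝ} (h0 : 0 ≤ r) (h1 : r < 1) :
    Real.sinh (Rmap r) = 2*r/(1-r^2) := by
  have hne : (1:ℝ) - r ≠ 0 := by linarith
  have hne2 : (1:ℝ) + r ≠ 0 := by linarith
  have hne3 : (1:ℝ) - r^2 ≠ 0 := by nlinarith
  have hpos : (0:ℝ) < (1 + r)/(1 - r) := div_pos (by linarith) (by linarith)
  rw [Real.sinh_eq, Rmap, Real.exp_log hpos, ← Real.log_inv, Real.exp_log (by positivity)]
  rw [inv_div]
  field_simp
  ring

lemma Rmap_pos {r : ℝ} (h0 : 0 < r) (h1 : r < 1) : 0 < Rmap r := by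
  have : (1:ℝ) < (1 + r)/(1 - r) := by
    rw [lt_div_iff₀ (by linarith)]; linarith
  exact Real.log_pos this

lemma Rmap_zero : Rmap 0 = 0 := by simp [Rmap]

lemma gradient_of_locally_const {F : Type*} [NormedAddCommGroup F] [InnerProductSpace ℝ F] [CompleteSpace F]
    {u : F → ℝ} {x : F} {a : ℝ} (hev : u =ᶠ[nhds x] fun _ => a) : gradient u x = 0 := by
  have h1 : fderiv ℝ u x = fderiv ℝ (fun _ => a) x := hev.fderiv_eq
  unfold gradient
  rw [h1, fderiv_fun_const]
  simp

lemma norm_gradient_comp_norm {F : Type*} [NormedAddCommGroup F] [InnerProductSpace ℝ F] [CompleteSpace F]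
    [Nontrivial F] {u : F → ℝ} {h : ℝ → ℝ} {m : ℝ} {x : F} (hx : x ≠ 0)
    (hd : HasDerivAt h m ‖x‖)
    (hev : u =ᶠ[nhds x] fun y => h ‖y‖) :
    ‖gradient u x‖ = |m| := by
  have hnd : DifferentiableAt ℝ (fun y : F => ‖y‖) x :=
    (contDiffAt_norm (n := 1) ℝ hx).differentiableAt one_ne_zero
  have hD : HasFDerivAt (fun y : F => ‖y‖) (fderiv ℝ (fun y : F => ‖y‖) x) x := hnd.hasFDerivAt
  have hcomp : HasFDerivAt (fun y : F => h ‖y‖) (m • fderiv ℝ (fun y : F => ‖y‖) x) x :=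
    hd.comp_hasFDerivAt x hD
  have hu : HasFDerivAt u (m • fderiv ℝ (fun y : F => ‖y‖) x) x :=
    hcomp.congr_of_eventuallyEq hev
  have hg : gradient u x = (InnerProductSpace.toDual ℝ F).symm
      (m • fderiv ℝ (fun y : F => ‖y‖) x) := by
    unfold gradient
    rw [hu.fderiv]
  rw [hg, LinearIsometryEquiv.norm_map, norm_smul, Real.norm_eq_abs,
    norm_fderiv_norm hnd, mul_one]

set_option maxHeartbeats 1000000 in
theorem moser_sequence_integrals (n : ℕ) (hn : 2 ≤ n) (k : ℕ) (hk : 1 ≤ k)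
    (ω : ℝ) (hω : ω = n * (volume (ball (0 : EuclideanSpace ℝ (Fin n)) 1)).toReal)
    (ρ : EuclideanSpace ℝ (Fin n) → ℝ)
    (hρ : ∀ x, ρ x = Real.log ((1 + ‖x‖) / (1 - ‖x‖)))
    (u : EuclideanSpace ℝ (Fin n) → ℝ)
    (hu : ∀ x, u x = ω ^ (-(1:ℝ)/n) *
      (if ρ x < Real.exp (-(k:ℝ)) then (k : ℝ) ^ (((n:ℝ) - 1)/n)
       else if ρ x < 1 then (k : ℝ) ^ (((n:ℝ) - 1)/n) * (-Real.log (ρ x)) / k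
       else 0)) :
    (∫ x in ball (0 : EuclideanSpace ℝ (Fin n)) 1, ‖gradient u x‖ ^ n
      = (1 / (k:ℝ)) * ∫ t in (Real.exp (-(k:ℝ)))..1, Real.sinh t ^ (n - 1) / t ^ n) ∧
    (∫ x in ball (0 : EuclideanSpace ℝ (Fin n)) 1, |u x| ^ n * (2 / (1 - ‖x‖ ^ 2)) ^ n
      = (k : ℝ) ^ (n - 1) * (∫ t in (0:ℝ)..(Real.exp (-(k:ℝ))), Real.sinh t ^ (n - 1))
        + (1 / (k:ℝ)) * ∫ t in (Real.exp (-(k:ℝ)))..1,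
            (-Real.log t) ^ n * Real.sinh t ^ (n - 1)) := by
  have hn0 : (0:ℝ) < n := by positivity
  have hnne : (n:ℝ) ≠ 0 := hn0.ne'
  have hk0 : (0:ℝ) < k := by exact_mod_cast hk
  have hdim : Module.finrank ℝ (EuclideanSpace ℝ (Fin n)) = n := finrank_euclideanSpace_fin
  haveI : Nontrivial (EuclideanSpace ℝ (Fin n)) := by
    apply Module.nontrivial_of_finrank_pos (R := ℝ)
    rw [hdim]; omega
  set Ek : ℝ := Real.exp (-(k:ℝ)) with hEk
  have hEk0 : 0 < Ek := Real.exp_pos _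
  have hEk1 : Ek < 1 := by
    rw [hEk, ← Real.exp_zero]
    exact Real.exp_lt_exp.2 (by linarith)
  set r1 : ℝ := (Real.exp Ek - 1)/(Real.exp Ek + 1) with hr1def
  set r2 : ℝ := (Real.exp 1 - 1)/(Real.exp 1 + 1) with hr2def
  have hRr1 : Rmap r1 = Ek := Rmap_inv Ek
  have hRr2 : Rmap r2 = 1 := Rmap_inv 1
  have hexp1 : (1:ℝ) < Real.exp Ek := by
    have := Real.add_one_le_exp Ek; linarith
  have hexp2 : (1:ℝ) < Real.exp 1 := by
    have := Real.add_one_le_exp (1:ℝ); linarith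
  have hr10 : 0 < r1 := div_pos (by linarith) (by linarith)
  have hr11 : r1 < 1 := by
    rw [hr1def, div_lt_one (by linarith)]; linarith
  have hr20 : 0 < r2 := div_pos (by linarith) (by linarith)
  have hr21 : r2 < 1 := by
    rw [hr2def, div_lt_one (by linarith)]; linarith
  have hr1m : r1 ∈ Ico (0:ℝ) 1 := ⟨hr10.le, hr11⟩
  have hr2m : r2 ∈ Ico (0:ℝ) 1 := ⟨hr20.le, hr21⟩
  have hr12 : r1 < r2 := by
    rw [← Rmap_strictMonoOn.lt_iff_lt hr1m hr2m, hRr1, hRr2]; exact hEk1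
  have hRmono : MonotoneOn Rmap (Ico (0:ℝ) 1) := Rmap_strictMonoOn.monotoneOn
  have hωpos : 0 < ω := by
    rw [hω]
    have h1 : (0:ENNReal) < volume (ball (0 : EuclideanSpace ℝ (Fin n)) 1) :=
      measure_ball_pos _ _ one_pos
    have h2 : volume (ball (0 : EuclideanSpace ℝ (Fin n)) 1) < ⊤ := measure_ball_lt_top
    have := ENNReal.toReal_pos h1.ne' h2.ne
    positivity
  set c : ℝ := ω ^ (-(1:ℝ)/n) with hcdef
  have hc0 : 0 < c := Real.rpow_pos_of_pos hωpos _
  set K1 : ℝ := (k:ℝ) ^ (((n:ℝ) - 1)/n) with hK1def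
  have hK10 : 0 < K1 := Real.rpow_pos_of_pos hk0 _
  have hcn : c ^ n = ω⁻¹ := by
    rw [hcdef, ← Real.rpow_natCast (ω ^ (-(1:ℝ)/n)) n, ← Real.rpow_mul hωpos.le]
    rw [div_mul_cancel₀ _ hnne, Real.rpow_neg_one]
  have hK1n : K1 ^ n = (k:ℝ) ^ (n - 1) := by
    rw [hK1def, ← Real.rpow_natCast ((k:ℝ) ^ (((n:ℝ) - 1)/n)) n, ← Real.rpow_mul hk0.le]
    rw [div_mul_cancel₀ _ hnne]
    rw [show ((n:ℝ) - 1) = ((n - 1 : ℕ) : ℝ) by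
      rw [Nat.cast_sub (by omega)]; norm_num]
    exact Real.rpow_natCast _ _
  have hρR : ∀ x : EuclideanSpace ℝ (Fin n), ρ x = Rmap ‖x‖ := fun x => hρ x
  -- region facts for u
  have hu_inner : ∀ y : EuclideanSpace ℝ (Fin n), ‖y‖ < r1 → u y = c * K1 := by
    intro y hy
    have hym : ‖y‖ ∈ Ico (0:ℝ) 1 := ⟨norm_nonneg y, hy.trans hr11⟩
    rw [hu y, if_pos]
    rw [hρR, ← hRr1]
    exact Rmap_strictMonoOn hym hr1m hy
  have hu_mid : ∀ y : EuclideanSpace ℝ (Fin n), r1 ≤ ‖y‖ → ‖y‖ < r2 →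
      u y = c * (K1 * (-Real.log (Rmap ‖y‖)) / k) := by
    intro y hy1 hy2
    have hym : ‖y‖ ∈ Ico (0:ℝ) 1 := ⟨norm_nonneg y, hy2.trans hr21⟩
    rw [hu y, if_neg, if_pos, hρR]
    · rw [hρR, ← hRr2]
      exact Rmap_strictMonoOn hym hr2m hy2
    · rw [hρR, ← hRr1, not_lt]
      exact hRmono hr1m hym hy1
  have hu_outer : ∀ y : EuclideanSpace ℝ (Fin n), r2 ≤ ‖y‖ → ‖y‖ < 1 → u y = 0 := by
    intro y hy1 hy2
    have hym : ‖y‖ ∈ Ico (0:ℝ) 1 := ⟨norm_nonneg y, hy2⟩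
    rw [hu y, if_neg, if_neg, mul_zero]
    · rw [hρR, ← hRr2, not_lt]
      exact hRmono hr2m hym hy1
    · rw [hρR, ← hRr1, not_lt]
      refine le_trans ?_ (hRmono hr1m hym (hr12.le.trans hy1))
      rw [hRr1]
  -- gradient computation
  set W : ℝ → ℝ := fun r => if r ∈ Ioo r1 r2 then
      (c * K1 / k * (2/((1-r^2) * Rmap r)))^n else 0 with hWdef
  have hgrad : ∀ x : EuclideanSpace ℝ (Fin n), ‖x‖ < 1 → ‖x‖ ≠ r1 → ‖x‖ ≠ r2 →
      ‖gradient u x‖ ^ n = W ‖x‖ := by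
    intro x hx hne1 hne2
    rcases lt_trichotomy ‖x‖ r1 with h | h | h
    · have hev : u =ᶠ[nhds x] fun _ => c * K1 := by
        have hopen : IsOpen {y : EuclideanSpace ℝ (Fin n) | ‖y‖ < r1} :=
          isOpen_lt continuous_norm continuous_const
        filter_upwards [hopen.mem_nhds h] with y hy using hu_inner y hy
      rw [gradient_of_locally_const hev, norm_zero, zero_pow (by omega)]
      simp only [hWdef]
      rw [if_neg]
      rintro ⟨ha, hb⟩; exact absurd h (not_lt.2 ha.le)
    · exact absurd h hne1
    rcases lt_trichotomy ‖x‖ r2 with h2 | h2 | h2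
    · have hx0 : x ≠ 0 := by
        intro h0; rw [h0, norm_zero] at h; exact absurd h (not_lt.2 hr10.le)
      have hr0 : 0 < ‖x‖ := hr10.trans h
      have h1r2 : 0 < 1 - ‖x‖^2 := sub_pos.2 (pow_lt_one₀ (norm_nonneg x) hx two_ne_zero)
      have hRpos : 0 < Rmap ‖x‖ := Rmap_pos hr0 hx
      have hd0 : HasDerivAt Rmap (2/(1-‖x‖^2)) ‖x‖ := Rmap_hasDerivAt (by linarith) hx
      have hdlog := (hd0.log hRpos.ne').const_mul (-(c * K1 / k))
      have hfun : (fun s : ℝ => -(c * K1 / k) * Real.log (Rmap s))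
          = fun s => c * (K1 * (-Real.log (Rmap s)) / k) := by funext s; ring
      rw [hfun] at hdlog
      have hev : u =ᶠ[nhds x] fun y => c * (K1 * (-Real.log (Rmap ‖y‖)) / k) := by
        have hopen : IsOpen {y : EuclideanSpace ℝ (Fin n) | r1 < ‖y‖ ∧ ‖y‖ < r2} :=
          (isOpen_lt continuous_const continuous_norm).inter
            (isOpen_lt continuous_norm continuous_const)
        filter_upwards [hopen.mem_nhds ⟨h, h2⟩] with y hy using hu_mid y hy.1.le hy.2
      have hng := norm_gradient_comp_norm
        (h := fun s => c * (K1 * (-Real.log (Rmap s)) / k)) hx0 hdlog hev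
      rw [hng]
      simp only [hWdef]
      rw [if_pos (mem_Ioo.2 ⟨h, h2⟩)]
      have he : -(c * K1 / k) * (2/(1-‖x‖^2) / Rmap ‖x‖)
          = -(c * K1 / k * (2/((1-‖x‖^2) * Rmap ‖x‖))) := by rw [div_div]; ring
      rw [he, abs_neg, abs_of_nonneg (by positivity)]
    · exact absurd h2 hne2
    · have hev : u =ᶠ[nhds x] fun _ => (0:ℝ) := by
        have hopen : IsOpen {y : EuclideanSpace ℝ (Fin n) | r2 < ‖y‖ ∧ ‖y‖ < 1} :=
          (isOpen_lt continuous_const continuous_norm).inter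
            (isOpen_lt continuous_norm continuous_const)
        filter_upwards [hopen.mem_nhds ⟨h2, hx⟩] with y hy using hu_outer y hy.1.le hy.2
      rw [gradient_of_locally_const hev, norm_zero, zero_pow (by omega)]
      simp only [hWdef]
      rw [if_neg]
      rintro ⟨ha, hb⟩; exact absurd h2 (not_lt.2 hb.le)
  -- a.e. facts
  have hae : ∀ᵐ x : EuclideanSpace ℝ (Fin n), ‖x‖ ≠ r1 ∧ ‖x‖ ≠ r2 := by
    have h1 : volume (sphere (0 : EuclideanSpace ℝ (Fin n)) r1) = 0 :=
      Measure.addHaar_sphere volume 0 r1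
    have h2 : volume (sphere (0 : EuclideanSpace ℝ (Fin n)) r2) = 0 :=
      Measure.addHaar_sphere volume 0 r2
    have h3 := measure_union_null h1 h2
    rw [← compl_mem_ae_iff] at h3
    filter_upwards [h3] with x hx
    simp only [mem_compl_iff, mem_union, mem_sphere_iff_norm, sub_zero] at hx
    push_neg at hx
    exact hx
  have key1 : ∫ x in ball (0 : EuclideanSpace ℝ (Fin n)) 1, ‖gradient u x‖ ^ n
      = ∫ x in ball (0 : EuclideanSpace ℝ (Fin n)) 1, W ‖x‖ := by
    apply setIntegral_congr_ae measurableSet_ball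
    filter_upwards [hae] with x hx hmem
    exact hgrad x (mem_ball_zero_iff.1 hmem) hx.1 hx.2
  have key2 : ∫ x in ball (0 : EuclideanSpace ℝ (Fin n)) 1, W ‖x‖
      = ∫ x : EuclideanSpace ℝ (Fin n), W ‖x‖ := by
    apply setIntegral_eq_integral_of_forall_compl_eq_zero
    intro x hx
    have hx1 : ¬ ‖x‖ < 1 := by simpa [mem_ball_zero_iff] using hx
    simp only [hWdef]
    rw [if_neg]
    rintro ⟨ha, hb⟩
    exact hx1 (hb.trans hr21)
  have key3 : ∫ x : EuclideanSpace ℝ (Fin n), W ‖x‖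
      = n • (volume (ball (0 : EuclideanSpace ℝ (Fin n)) 1)).toReal
        • ∫ y in Ioi (0:ℝ), y ^ (n-1) • W y := by
    have h := MeasureTheory.integral_fun_norm_addHaar
      (volume : Measure (EuclideanSpace ℝ (Fin n))) W
    rw [hdim] at h
    exact h
  have key4 : ∫ y in Ioi (0:ℝ), y ^ (n-1) • W y
      = ∫ y in r1..r2, y^(n-1) * (c * K1 / k * (2/((1-y^2) * Rmap y)))^n := by
    have hfun : (fun y : ℝ => y ^ (n-1) • W y)
        = Set.indicator (Ioo r1 r2)
            (fun y => y^(n-1) * (c * K1 / k * (2/((1-y^2) * Rmap y)))^n) := by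
      funext y
      rw [Set.indicator_apply]
      by_cases hy : y ∈ Ioo r1 r2
      · rw [if_pos hy]
        simp only [hWdef]
        rw [if_pos hy, smul_eq_mul]
      · rw [if_neg hy]
        simp only [hWdef]
        rw [if_neg hy, smul_zero]
    have hss : Ioo r1 r2 ⊆ Ioi (0:ℝ) := fun y hy => lt_trans hr10 hy.1
    rw [intervalIntegral.integral_of_le hr12.le, integral_Ioc_eq_integral_Ioo]
    rw [hfun, setIntegral_indicator measurableSet_Ioo, inter_eq_self_of_subset_right hss]
  have hmemIcc : ∀ y ∈ Icc r1 r2, 0 < y ∧ y < 1 := fun y hy =>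
    ⟨hr10.trans_le hy.1, lt_of_le_of_lt hy.2 hr21⟩
  have huIcc : uIcc r1 r2 = Icc r1 r2 := uIcc_of_le hr12.le
  have hRimage : ∀ y ∈ Icc r1 r2, Ek ≤ Rmap y ∧ Rmap y ≤ 1 := by
    intro y hy
    obtain ⟨hy0, hy1⟩ := hmemIcc y hy
    have hym : y ∈ Ico (0:ℝ) 1 := ⟨hy0.le, hy1⟩
    exact ⟨hRr1 ▸ hRmono hr1m hym hy.1, hRr2 ▸ hRmono hym hr2m hy.2⟩
  have hsub1 : ∫ y in r1..r2, (2/(1-y^2)) • ((fun t => Real.sinh t ^ (n-1) / t^n) ∘ Rmap) y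
      = ∫ t in Ek..1, Real.sinh t ^ (n-1) / t^n := by
    have h := intervalIntegral.integral_comp_smul_deriv' (a := r1) (b := r2) (f := Rmap)
      (f' := fun y => 2/(1-y^2)) (g := fun t => Real.sinh t ^ (n-1) / t^n)
      ?_ ?_ ?_
    · rw [hRr1, hRr2] at h; exact h
    · intro y hy
      rw [huIcc] at hy
      obtain ⟨hy0, hy1⟩ := hmemIcc y hy
      exact Rmap_hasDerivAt (by linarith) hy1
    · apply ContinuousOn.div continuousOn_const (by fun_prop)
      intro y hy
      rw [huIcc] at hy
      obtain ⟨hy0, hy1⟩ := hmemIcc y hy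
      exact (sub_pos.2 (pow_lt_one₀ hy0.le hy1 two_ne_zero)).ne'
    · apply ContinuousOn.div (by fun_prop) (by fun_prop)
      intro t ht
      rw [huIcc] at ht
      obtain ⟨y, hy, rfl⟩ := ht
      have h1 := (hRimage y hy).1
      have ht0 : 0 < Rmap y := lt_of_lt_of_le hEk0 h1
      positivity
  have key5 : ∫ y in r1..r2, y^(n-1) * (c * K1 / k * (2/((1-y^2) * Rmap y)))^n
      = (c * K1 / k)^n * ∫ t in Ek..1, Real.sinh t ^ (n-1) / t^n := by
    rw [← hsub1, ← intervalIntegral.integral_const_mul]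
    apply intervalIntegral.integral_congr
    intro y hy
    rw [huIcc] at hy
    obtain ⟨hy0, hy1⟩ := hmemIcc y hy
    have hD : (0:ℝ) < 1 - y^2 := sub_pos.2 (pow_lt_one₀ hy0.le hy1 two_ne_zero)
    have hR0 : 0 < Rmap y := Rmap_pos hy0 hy1
    simp only [Function.comp_apply, smul_eq_mul]
    rw [sinh_Rmap hy0.le hy1]
    obtain ⟨m, hm⟩ : ∃ m, n = m + 1 := ⟨n - 1, by omega⟩
    subst hm
    simp only [Nat.add_sub_cancel]
    simp only [mul_pow, div_pow]
    field_simp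
    ring
  have hfirst : ∫ x in ball (0 : EuclideanSpace ℝ (Fin n)) 1, ‖gradient u x‖ ^ n
      = 1 / (k:ℝ) * ∫ t in Ek..1, Real.sinh t ^ (n-1) / t^n := by
    rw [key1, key2, key3, key4, key5]
    rw [nsmul_eq_mul, smul_eq_mul, ← mul_assoc, ← hω]
    rw [div_pow, mul_pow, hcn, hK1n]
    rw [show (k:ℝ)^n = (k:ℝ)^(n-1) * k by rw [← pow_succ]; congr 1; omega]
    have hkpow : ((k:ℝ))^(n-1) ≠ 0 := by positivity
    field_simp
  -- second integral
  set Uval : ℝ → ℝ := fun r => if r < r1 then c * K1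
      else if r < r2 then c * (K1 * (-Real.log (Rmap r)) / k) else 0 with hUdef
  have hu_exact : ∀ x : EuclideanSpace ℝ (Fin n), ‖x‖ < 1 → u x = Uval ‖x‖ := by
    intro x hx
    simp only [hUdef]
    by_cases h1 : ‖x‖ < r1
    · rw [if_pos h1]; exact hu_inner x h1
    · rw [if_neg h1]
      by_cases h2 : ‖x‖ < r2
      · rw [if_pos h2]; exact hu_mid x (not_lt.1 h1) h2
      · rw [if_neg h2]; exact hu_outer x (not_lt.1 h2) hx
  set F2 : ℝ → ℝ := fun r => if r < 1 then |Uval r|^n * (2/(1-r^2))^n else 0 with hF2def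
  have hF2zero : ∀ y : ℝ, r2 ≤ y → F2 y = 0 := by
    intro y hy
    simp only [hF2def]
    by_cases h1 : y < 1
    · rw [if_pos h1]
      have hU : Uval y = 0 := by
        simp only [hUdef]
        rw [if_neg (not_lt.2 (hr12.le.trans hy)), if_neg (not_lt.2 hy)]
      rw [hU, abs_zero, zero_pow (by omega), zero_mul]
    · rw [if_neg h1]
  have hUr1 : ∀ y : ℝ, 0 ≤ y → y ≤ r1 → Uval y = c * K1 := by
    intro y h0 h1
    simp only [hUdef]
    rcases lt_or_eq_of_le h1 with h | h
    · rw [if_pos h]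
    · subst h
      rw [if_neg (lt_irrefl _), if_pos hr12, hRr1, hEk, Real.log_exp]
      field_simp
  have hUabs : ∀ y ∈ Icc r1 r2, |Uval y|^n = (c * K1 / k * (-Real.log (Rmap y)))^n := by
    intro y hy
    rcases lt_or_eq_of_le hy.2 with h | h
    · have hval : Uval y = c * (K1 * (-Real.log (Rmap y)) / k) := by
        simp only [hUdef]
        rw [if_neg (not_lt.2 hy.1), if_pos h]
      have hlognp : Real.log (Rmap y) ≤ 0 :=
        Real.log_nonpos (Rmap_pos (hmemIcc y hy).1 (hmemIcc y hy).2).le (hRimage y hy).2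
      have hnn : 0 ≤ c * (K1 * (-Real.log (Rmap y)) / k) := by
        apply mul_nonneg hc0.le
        apply div_nonneg (mul_nonneg hK10.le (by linarith)) hk0.le
      rw [hval, abs_of_nonneg hnn]
      congr 1
      ring
    · have hU : Uval r2 = 0 := by
        simp only [hUdef]
        rw [if_neg (not_lt.2 hr12.le), if_neg (lt_irrefl _)]
      rw [h, hU, hRr2, Real.log_one, abs_zero, neg_zero, mul_zero]
  have keyB1 : ∫ x in ball (0 : EuclideanSpace ℝ (Fin n)) 1, |u x| ^ n * (2 / (1 - ‖x‖ ^ 2)) ^ n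
      = ∫ x : EuclideanSpace ℝ (Fin n), F2 ‖x‖ := by
    have h1 : ∫ x in ball (0 : EuclideanSpace ℝ (Fin n)) 1, |u x| ^ n * (2 / (1 - ‖x‖ ^ 2)) ^ n
        = ∫ x in ball (0 : EuclideanSpace ℝ (Fin n)) 1, F2 ‖x‖ := by
      apply setIntegral_congr_fun measurableSet_ball
      intro x hx
      have hx1 : ‖x‖ < 1 := mem_ball_zero_iff.1 hx
      simp only [hF2def]
      rw [if_pos hx1, hu_exact x hx1]
    rw [h1]
    apply setIntegral_eq_integral_of_forall_compl_eq_zero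
    intro x hx
    have hx1 : ¬ ‖x‖ < 1 := by simpa [mem_ball_zero_iff] using hx
    simp only [hF2def]
    rw [if_neg hx1]
  have keyB2 : ∫ x : EuclideanSpace ℝ (Fin n), F2 ‖x‖
      = n • (volume (ball (0 : EuclideanSpace ℝ (Fin n)) 1)).toReal
        • ∫ y in Ioi (0:ℝ), y ^ (n-1) • F2 y := by
    have h := MeasureTheory.integral_fun_norm_addHaar
      (volume : Measure (EuclideanSpace ℝ (Fin n))) F2
    rw [hdim] at h
    exact h
  -- continuity facts
  have hcden : ∀ s : Set ℝ, (∀ y ∈ s, 0 ≤ y ∧ y < 1) →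
      ContinuousOn (fun y : ℝ => (2/(1-y^2))^n) s := by
    intro s hs
    apply ContinuousOn.pow
    apply ContinuousOn.div continuousOn_const (by fun_prop)
    intro y hy
    obtain ⟨h0, h1⟩ := hs y hy
    exact (sub_pos.2 (pow_lt_one₀ h0 h1 two_ne_zero)).ne'
  have hRcont : ContinuousOn Rmap (Icc r1 r2) := by
    apply ContinuousOn.log
    · apply ContinuousOn.div (by fun_prop) (by fun_prop)
      intro y hy
      obtain ⟨h0, h1⟩ := hmemIcc y hy
      intro hc; rw [sub_eq_zero] at hc; exact absurd hc.symm (ne_of_lt h1)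
    · intro y hy
      obtain ⟨h0, h1⟩ := hmemIcc y hy
      exact (div_pos (by linarith) (by linarith)).ne'
  have hlogRcont : ContinuousOn (fun y => -Real.log (Rmap y)) (Icc r1 r2) := by
    apply ContinuousOn.neg
    apply ContinuousOn.log hRcont
    intro y hy
    exact (Rmap_pos (hmemIcc y hy).1 (hmemIcc y hy).2).ne'
  set φ1 : ℝ → ℝ := fun y => y^(n-1) * ((c*K1)^n * (2/(1-y^2))^n) with hφ1def
  set φ2 : ℝ → ℝ := fun y =>
      y^(n-1) * ((c*K1/k * (-Real.log (Rmap y)))^n * (2/(1-y^2))^n) with hφ2def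
  have hEq1 : EqOn (fun y : ℝ => y^(n-1) • F2 y) φ1 (Icc 0 r1) := by
    intro y hy
    obtain ⟨h0, h1⟩ := hy
    have hylt : y < 1 := lt_of_le_of_lt h1 hr11
    simp only [hφ1def, smul_eq_mul, hF2def]
    rw [if_pos hylt, hUr1 y h0 h1, abs_of_pos (by positivity)]
  have hEq2 : EqOn (fun y : ℝ => y^(n-1) • F2 y) φ2 (Icc r1 r2) := by
    intro y hy
    have hylt : y < 1 := lt_of_le_of_lt hy.2 hr21
    simp only [hφ2def, smul_eq_mul, hF2def]
    rw [if_pos hylt, hUabs y hy]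
  have hφ1cont : ContinuousOn φ1 (Icc (0:ℝ) r1) := by
    simp only [hφ1def]
    exact ((continuous_pow (n-1)).continuousOn).mul
      (continuousOn_const.mul (hcden _ (fun y hy => ⟨hy.1, lt_of_le_of_lt hy.2 hr11⟩)))
  have hφ2cont : ContinuousOn φ2 (Icc r1 r2) := by
    simp only [hφ2def]
    exact ((continuous_pow (n-1)).continuousOn).mul
      (((continuousOn_const.mul hlogRcont).pow n).mul
        (hcden _ (fun y hy => ⟨(hmemIcc y hy).1.le, (hmemIcc y hy).2⟩)))
  have hI1 : IntervalIntegrable (fun y : ℝ => y^(n-1) • F2 y) volume 0 r1 := by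
    rw [intervalIntegrable_iff, uIoc_of_le hr10.le]
    exact ((hφ1cont.integrableOn_Icc).congr_fun hEq1.symm measurableSet_Icc).mono_set
      Ioc_subset_Icc_self
  have hI2 : IntervalIntegrable (fun y : ℝ => y^(n-1) • F2 y) volume r1 r2 := by
    rw [intervalIntegrable_iff, uIoc_of_le hr12.le]
    exact ((hφ2cont.integrableOn_Icc).congr_fun hEq2.symm measurableSet_Icc).mono_set
      Ioc_subset_Icc_self
  have hsplit : ∫ y in Ioi (0:ℝ), y ^ (n-1) • F2 y
      = (∫ y in (0:ℝ)..r1, y^(n-1) • F2 y) + ∫ y in r1..r2, y^(n-1) • F2 y := by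
    rw [intervalIntegral.integral_add_adjacent_intervals hI1 hI2]
    have hcongr : ∫ y in Ioi (0:ℝ), y ^ (n-1) • F2 y
        = ∫ y in Ioi (0:ℝ), (Ioo (0:ℝ) r2).indicator (fun y => y ^ (n-1) • F2 y) y := by
      apply setIntegral_congr_fun measurableSet_Ioi
      intro y hy
      show y ^ (n-1) • F2 y = (Ioo (0:ℝ) r2).indicator (fun y => y ^ (n-1) • F2 y) y
      by_cases h2 : y < r2
      · rw [Set.indicator_of_mem (mem_Ioo.2 ⟨mem_Ioi.1 hy, h2⟩)]
      · rw [Set.indicator_of_notMem (fun hc => h2 (mem_Ioo.1 hc).2),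
          hF2zero y (not_lt.1 h2), smul_zero]
    have hss2 : Ioo (0:ℝ) r2 ⊆ Ioi (0:ℝ) := fun y hy => hy.1
    rw [hcongr, setIntegral_indicator measurableSet_Ioo,
      inter_eq_self_of_subset_right hss2,
      intervalIntegral.integral_of_le (hr10.trans hr12).le, integral_Ioc_eq_integral_Ioo]
  have huIcc2 : uIcc (0:ℝ) r1 = Icc 0 r1 := uIcc_of_le hr10.le
  have hsubA : ∫ y in (0:ℝ)..r1, (2/(1-y^2)) • ((fun t => Real.sinh t ^ (n-1)) ∘ Rmap) y
      = ∫ t in (0:ℝ)..Ek, Real.sinh t ^ (n-1) := by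
    have h := intervalIntegral.integral_comp_smul_deriv (a := (0:ℝ)) (b := r1) (f := Rmap)
      (f' := fun y => 2/(1-y^2)) (g := fun t => Real.sinh t ^ (n-1)) ?_ ?_ ?_
    · rw [Rmap_zero, hRr1] at h; exact h
    · intro y hy
      rw [huIcc2] at hy
      exact Rmap_hasDerivAt (by linarith [hy.1]) (lt_of_le_of_lt hy.2 hr11)
    · apply ContinuousOn.div continuousOn_const (by fun_prop)
      intro y hy
      rw [huIcc2] at hy
      exact (sub_pos.2 (pow_lt_one₀ hy.1 (lt_of_le_of_lt hy.2 hr11) two_ne_zero)).ne'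
    · fun_prop
  have keyA : ∫ y in (0:ℝ)..r1, y^(n-1) • F2 y
      = (c*K1)^n * ∫ t in (0:ℝ)..Ek, Real.sinh t ^ (n-1) := by
    rw [← hsubA, ← intervalIntegral.integral_const_mul]
    apply intervalIntegral.integral_congr
    intro y hy
    rw [huIcc2] at hy
    obtain ⟨h0, h1⟩ := hy
    have hylt : y < 1 := lt_of_le_of_lt h1 hr11
    have hD : (0:ℝ) < 1 - y^2 := sub_pos.2 (pow_lt_one₀ h0 hylt two_ne_zero)
    simp only [smul_eq_mul, hF2def, Function.comp_apply]
    rw [if_pos hylt, hUr1 y h0 h1, abs_of_pos (by positivity), sinh_Rmap h0 hylt]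
    obtain ⟨m, hm⟩ : ∃ m, n = m + 1 := ⟨n - 1, by omega⟩
    subst hm
    simp only [Nat.add_sub_cancel]
    simp only [mul_pow, div_pow]
    field_simp
    ring
  have hsubB : ∫ y in r1..r2,
        (2/(1-y^2)) • ((fun t => (-Real.log t)^n * Real.sinh t ^ (n-1)) ∘ Rmap) y
      = ∫ t in Ek..1, (-Real.log t)^n * Real.sinh t ^ (n-1) := by
    have h := intervalIntegral.integral_comp_smul_deriv' (a := r1) (b := r2) (f := Rmap)
      (f' := fun y => 2/(1-y^2)) (g := fun t => (-Real.log t)^n * Real.sinh t ^ (n-1))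
      ?_ ?_ ?_
    · rw [hRr1, hRr2] at h; exact h
    · intro y hy
      rw [huIcc] at hy
      obtain ⟨hy0, hy1⟩ := hmemIcc y hy
      exact Rmap_hasDerivAt (by linarith) hy1
    · apply ContinuousOn.div continuousOn_const (by fun_prop)
      intro y hy
      rw [huIcc] at hy
      obtain ⟨hy0, hy1⟩ := hmemIcc y hy
      exact (sub_pos.2 (pow_lt_one₀ hy0.le hy1 two_ne_zero)).ne'
    · apply ContinuousOn.mul
      · apply ContinuousOn.pow
        apply ContinuousOn.neg
        apply Real.continuousOn_log.mono
        intro t ht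
        rw [huIcc] at ht
        obtain ⟨y, hy, rfl⟩ := ht
        exact (lt_of_lt_of_le hEk0 (hRimage y hy).1).ne'
      · fun_prop
  have keyBmid : ∫ y in r1..r2, y^(n-1) • F2 y
      = (c*K1/k)^n * ∫ t in Ek..1, (-Real.log t)^n * Real.sinh t ^ (n-1) := by
    rw [← hsubB, ← intervalIntegral.integral_const_mul]
    apply intervalIntegral.integral_congr
    intro y hy
    rw [huIcc] at hy
    obtain ⟨hy0, hy1⟩ := hmemIcc y hy
    have hD : (0:ℝ) < 1 - y^2 := sub_pos.2 (pow_lt_one₀ hy0.le hy1 two_ne_zero)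
    simp only [smul_eq_mul, hF2def, Function.comp_apply]
    rw [if_pos hy1, hUabs y hy, sinh_Rmap hy0.le hy1]
    obtain ⟨m, hm⟩ : ∃ m, n = m + 1 := ⟨n - 1, by omega⟩
    subst hm
    simp only [Nat.add_sub_cancel]
    simp only [mul_pow, div_pow]
    field_simp
    ring
  have hsecond : ∫ x in ball (0 : EuclideanSpace ℝ (Fin n)) 1,
        |u x| ^ n * (2 / (1 - ‖x‖ ^ 2)) ^ n
      = (k:ℝ) ^ (n-1) * (∫ t in (0:ℝ)..Ek, Real.sinh t ^ (n-1))
        + 1 / (k:ℝ) * ∫ t in Ek..1, (-Real.log t)^n * Real.sinh t ^ (n-1) := by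
    rw [keyB1, keyB2, hsplit, keyA, keyBmid]
    rw [nsmul_eq_mul, smul_eq_mul, ← mul_assoc, ← hω]
    rw [mul_pow, hcn, hK1n, div_pow, mul_pow, hcn, hK1n]
    rw [show (k:ℝ)^n = (k:ℝ)^(n-1) * k by rw [← pow_succ]; congr 1; omega]
    have hkpow : ((k:ℝ))^(n-1) ≠ 0 := by positivity
    field_simp
  exact ⟨hfirst, hsecond⟩
end
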